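/- arXiv:1508.03802 — 2 statements merged into one kernel-verified Lean document; each statement's English description precedes it below -/
import Mathlib

section
/- Let ℓ ≥ 2. If M is a 1-dimensional module over the KLR algebra R(ν) of type A^{(1)}_{ℓ−1} with |ν| = m, spanned by a vector v with 1_{\underline{i}} v = v for a unique sequence \underline{i} = (i_1,…,i_m) ∈ Seq(ν), then all x_r act as 0 on v, all ψ_r act as 0 on v, and \underline{i} satisfies either i_{r+1} = i_r + 1 (mod ℓ) for all r, or i_{r+1} = i_r − 1 (mod ℓ) for all r. Consequently ν = α_i + α_{i+1} + … + α_{i+m−1} or ν = α_i + α_{i−1} + … + α_{i−m+1} for some i ∈ ℤ/ℓℤ. -/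
/-- The type `A^{(1)}_{ℓ-1}` Cartan matrix entry `a_{ij}` for `i j : ℤ/ℓℤ`. -/
def cartanA (ℓ : ℕ) (i j : ZMod ℓ) : ℤ :=
  if i = j then 2
  else if j = i + 1 ∧ j = i - 1 then -2
  else if j = i + 1 ∨ j = i - 1 then -1
  else 0

/-!
Since `v` spans the module, every generator acts on `v` by a scalar, and a nilpotent `x_r` acts
by `0`. The vector `ψ_r v` lies in `1_{s_r(i)} M`, which is zero unless `s_r(i) = i`; but
`i_r = i_{r+1}` is impossible, since then `ψ_r x_r - x_{r+1} ψ_r` would act on `v` both as the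
identity and as `0`. Hence `ψ_r v = 0`, so `ψ_r² v = 0` forces `i_{r+1} = i_r ± 1`, and for
`ℓ ≠ 2` the braid relation rules out `i_r = i_{r+2}`: consecutive steps never turn back, so
they all go the same way (for `ℓ = 2` the two directions coincide).
-/

section OneDimensional

variable {K V : Type*} [Field K] [AddCommGroup V] [Module K V] {v : V}

theorem Module.End.apply_eq_zero_of_isNilpotent (hv : v ≠ 0)
    (hspan : ∀ w : V, ∃ c : K, w = c • v) {f : Module.End K V} (hf : IsNilpotent f) :
    f v = 0 := by
  obtain ⟨c, hc⟩ := hspan (f v)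
  have hμ : f.HasEigenvalue c :=
    Module.End.hasEigenvalue_of_hasEigenvector ⟨Module.End.mem_eigenspace_iff.mpr hc, hv⟩
  rw [hc, (hμ.isNilpotent_of_isNilpotent hf).eq_zero, zero_smul]

theorem Module.End.apply_eq_zero_of_mul_eq_mul (hspan : ∀ w : V, ∃ c : K, w = c • v)
    {f e e' : Module.End K V} (hcomm : f * e = e' * f) (he : e v = v) (he' : e' v = 0) :
    f v = 0 := by
  obtain ⟨c, hc⟩ := hspan (f v)
  calc f v = (f * e) v := by rw [Module.End.mul_apply, he]
    _ = c • e' v := by rw [hcomm, Module.End.mul_apply, hc, map_smul]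
    _ = 0 := by rw [he', smul_zero]

theorem Module.End.sub_apply_eq_zero_of_apply_eq_zero (hspan : ∀ w : V, ∃ c : K, w = c • v)
    (f : Module.End K V) {g h : Module.End K V} (hg : g v = 0) (hh : h v = 0) :
    (f * g - h * f) v = 0 := by
  obtain ⟨c, hc⟩ := hspan (f v)
  simp only [LinearMap.sub_apply, Module.End.mul_apply, hg, hc, map_smul, hh, map_zero,
    smul_zero, sub_zero]

end OneDimensional

theorem Fin.exists_forall_eq_add_nsmul {G : Type*} [AddCommMonoid G] {m : ℕ}
    (s : Fin m → G) (d : G)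
    (h : ∀ (r : ℕ) (hr : r + 1 < m), s ⟨r + 1, hr⟩ = s ⟨r, Nat.lt_of_succ_lt hr⟩ + d) :
    ∃ i : G, ∀ r : Fin m, s r = i + r.val • d := by
  rcases Nat.eq_zero_or_pos m with rfl | hm
  · exact ⟨0, fun r => r.elim0⟩
  refine ⟨s ⟨0, hm⟩, fun ⟨r, hr⟩ => ?_⟩
  induction r with
  | zero => simp
  | succ r ih => rw [h r hr, ih (by omega), succ_nsmul, add_assoc]

namespace ZMod

variable {ℓ : ℕ}

theorem eq_add_of_no_backtrack {a b c ε : ZMod ℓ} (hε : ε = 1 ∨ ε = -1) (hab : b = a + ε)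
    (hbc : c = b + 1 ∨ c = b - 1) (hac : ℓ ≠ 2 → a ≠ c) : c = b + ε := by
  by_cases hℓ : ℓ = 2
  · subst hℓ
    have hneg : (-1 : ZMod 2) = 1 := rfl
    rcases hε with rfl | rfl <;> rcases hbc with rfl | rfl <;> simp [sub_eq_add_neg, hneg]
  · rcases hε with rfl | rfl <;> rcases hbc with rfl | rfl
    · rfl
    · exact absurd (by rw [hab]; ring) (hac hℓ)
    · exact absurd (by rw [hab]; ring) (hac hℓ)
    · exact sub_eq_add_neg _ _

theorem ascending_or_descending_of_no_backtrack {m : ℕ} {s : Fin m → ZMod ℓ}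
    (hstep : ∀ (r : ℕ) (hr : r + 1 < m),
      s ⟨r + 1, hr⟩ = s ⟨r, Nat.lt_of_succ_lt hr⟩ + 1 ∨
        s ⟨r + 1, hr⟩ = s ⟨r, Nat.lt_of_succ_lt hr⟩ - 1)
    (hback : ℓ ≠ 2 → ∀ (r : ℕ) (hr : r + 2 < m),
      s ⟨r, Nat.lt_of_add_right_lt hr⟩ ≠ s ⟨r + 2, hr⟩) :
    (∀ (r : ℕ) (hr : r + 1 < m), s ⟨r + 1, hr⟩ = s ⟨r, Nat.lt_of_succ_lt hr⟩ + 1) ∨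
    (∀ (r : ℕ) (hr : r + 1 < m), s ⟨r + 1, hr⟩ = s ⟨r, Nat.lt_of_succ_lt hr⟩ - 1) := by
  rcases Nat.lt_or_ge 1 m with hm | hm
  swap
  · exact .inl fun r hr => absurd hr (by omega)
  have propagate : ∀ ε : ZMod ℓ, ε = 1 ∨ ε = -1 →
      s ⟨1, hm⟩ = s ⟨0, Nat.lt_of_succ_lt hm⟩ + ε →
      ∀ (r : ℕ) (hr : r + 1 < m), s ⟨r + 1, hr⟩ = s ⟨r, Nat.lt_of_succ_lt hr⟩ + ε := by
    intro ε hε h0 r hr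
    induction r with
    | zero => exact h0
    | succ r ih =>
      exact eq_add_of_no_backtrack hε (ih (by omega)) (hstep (r + 1) hr)
        fun hℓ => hback hℓ r hr
  rcases hstep 0 hm with h0 | h0
  · exact .inl (propagate 1 (.inl rfl) h0)
  · rw [sub_eq_add_neg] at h0
    simpa only [← sub_eq_add_neg] using Or.inr (propagate (-1) (.inr rfl) h0)

end ZMod

section KLR

variable {K V : Type*} [Field K] [AddCommGroup V] [Module K V] {ℓ m : ℕ}
  {E : (Fin m → ZMod ℓ) → Module.End K V} {X Ψ : ℕ → Module.End K V} {v : V}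
  {s : Fin m → ZMod ℓ}

theorem klr_adjacent_ne (hv : v ≠ 0) (hspan : ∀ w : V, ∃ c : K, w = c • v) (hsv : E s v = v)
    (hX : ∀ r : ℕ, r < m → X r v = 0)
    (hDot : ∀ (r : ℕ) (hr : r + 1 < m) (u : ℕ), u < m → ∀ t : Fin m → ZMod ℓ,
      (Ψ r * X u - X (if u = r then r + 1 else if u = r + 1 then r else u) * Ψ r) * E t =
        if u = r ∧ t ⟨r, Nat.lt_of_succ_lt hr⟩ = t ⟨r + 1, hr⟩ then E t
        else if u = r + 1 ∧ t ⟨r, Nat.lt_of_succ_lt hr⟩ = t ⟨r + 1, hr⟩ then -(E t)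
        else 0)
    (r : ℕ) (hr : r + 1 < m) : s ⟨r, Nat.lt_of_succ_lt hr⟩ ≠ s ⟨r + 1, hr⟩ := by
  intro heq
  have hdot := hDot r hr r (by omega) s
  rw [if_pos (⟨rfl, heq⟩ : r = r ∧ _), if_pos (rfl : r = r)] at hdot
  apply hv
  calc v = ((Ψ r * X r - X (r + 1) * Ψ r) * E s) v := by rw [hdot, hsv]
    _ = (Ψ r * X r - X (r + 1) * Ψ r) v := by rw [Module.End.mul_apply, hsv]
    _ = 0 := Module.End.sub_apply_eq_zero_of_apply_eq_zero hspan _ (hX r (by omega))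
        (hX (r + 1) hr)

theorem klr_psi_apply_eq_zero (hspan : ∀ w : V, ∃ c : K, w = c • v) (hsv : E s v = v)
    (hother : ∀ t, t ≠ s → E t v = 0)
    (hPsiE : ∀ (r : ℕ) (hr : r + 1 < m) t, Ψ r * E t =
      E (fun p => t (Equiv.swap (⟨r, Nat.lt_of_succ_lt hr⟩ : Fin m) ⟨r + 1, hr⟩ p)) * Ψ r)
    (r : ℕ) (hr : r + 1 < m) (hne : s ⟨r, Nat.lt_of_succ_lt hr⟩ ≠ s ⟨r + 1, hr⟩) :
    Ψ r v = 0 := by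
  refine Module.End.apply_eq_zero_of_mul_eq_mul hspan (hPsiE r hr s) hsv (hother _ fun h => ?_)
  have hswap := congrFun h ⟨r, Nat.lt_of_succ_lt hr⟩
  rw [Equiv.swap_apply_left] at hswap
  exact hne hswap.symm

theorem klr_adjacent_step (hv : v ≠ 0) (hsv : E s v = v)
    (hPsiSq : ∀ (r : ℕ) (hr : r + 1 < m) (t : Fin m → ZMod ℓ),
      Ψ r * Ψ r * E t =
        if t ⟨r, Nat.lt_of_succ_lt hr⟩ = t ⟨r + 1, hr⟩ then 0
        else if t ⟨r + 1, hr⟩ = t ⟨r, Nat.lt_of_succ_lt hr⟩ + 1 ∨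
            t ⟨r + 1, hr⟩ = t ⟨r, Nat.lt_of_succ_lt hr⟩ - 1 then
          (X r ^ (-(cartanA ℓ (t ⟨r, Nat.lt_of_succ_lt hr⟩) (t ⟨r + 1, hr⟩))).toNat
            + X (r + 1) ^
                (-(cartanA ℓ (t ⟨r + 1, hr⟩) (t ⟨r, Nat.lt_of_succ_lt hr⟩))).toNat) * E t
        else E t)
    (r : ℕ) (hr : r + 1 < m) (hne : s ⟨r, Nat.lt_of_succ_lt hr⟩ ≠ s ⟨r + 1, hr⟩)
    (hΨ : Ψ r v = 0) :
    s ⟨r + 1, hr⟩ = s ⟨r, Nat.lt_of_succ_lt hr⟩ + 1 ∨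
      s ⟨r + 1, hr⟩ = s ⟨r, Nat.lt_of_succ_lt hr⟩ - 1 := by
  by_contra hfar
  have hsq := hPsiSq r hr s
  rw [if_neg hne, if_neg hfar] at hsq
  apply hv
  calc v = (Ψ r * Ψ r * E s) v := by rw [hsq, hsv]
    _ = 0 := by rw [Module.End.mul_apply, hsv, Module.End.mul_apply, hΨ, map_zero]

theorem klr_no_backtrack (hv : v ≠ 0) (hsv : E s v = v)
    (hΨ : ∀ r : ℕ, r + 1 < m → Ψ r v = 0)
    (hstep : ∀ (r : ℕ) (hr : r + 1 < m),
      s ⟨r + 1, hr⟩ = s ⟨r, Nat.lt_of_succ_lt hr⟩ + 1 ∨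
        s ⟨r + 1, hr⟩ = s ⟨r, Nat.lt_of_succ_lt hr⟩ - 1)
    (hBraid : ∀ (r : ℕ) (hr : r + 2 < m) (t : Fin m → ZMod ℓ),
      (Ψ r * Ψ (r + 1) * Ψ r - Ψ (r + 1) * Ψ r * Ψ (r + 1)) * E t =
        if t ⟨r, Nat.lt_of_add_right_lt hr⟩ = t ⟨r + 2, hr⟩ ∧
            (t ⟨r + 1, Nat.lt_of_succ_lt hr⟩ = t ⟨r, Nat.lt_of_add_right_lt hr⟩ + 1 ∨
             t ⟨r + 1, Nat.lt_of_succ_lt hr⟩ = t ⟨r, Nat.lt_of_add_right_lt hr⟩ - 1) then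
          (if ℓ = 2 then (X r + X (r + 2)) * E t else E t)
        else 0)
    (hℓ : ℓ ≠ 2) (r : ℕ) (hr : r + 2 < m) :
    s ⟨r, Nat.lt_of_add_right_lt hr⟩ ≠ s ⟨r + 2, hr⟩ := by
  intro heq
  have hbraid := hBraid r hr s
  rw [if_pos ⟨heq, hstep r (by omega)⟩, if_neg hℓ] at hbraid
  apply hv
  calc v = ((Ψ r * Ψ (r + 1) * Ψ r - Ψ (r + 1) * Ψ r * Ψ (r + 1)) * E s) v := by
        rw [hbraid, hsv]
    _ = 0 := by
      simp only [Module.End.mul_apply, LinearMap.sub_apply, hsv, hΨ r (by omega),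
        hΨ (r + 1) (by omega), map_zero, sub_self]

end KLR

/-- Classification of 1-dimensional modules over the KLR algebra `R(ν)` of type
`A^{(1)}_{ℓ-1}`: if `M` is spanned by `v` with `1_s v = v` for a unique sequence `s`,
then all `x_r` and all `ψ_r` act by `0` on `v`, and `s` is either ascending
(`s_{r+1} = s_r + 1`) or descending (`s_{r+1} = s_r − 1`) modulo `ℓ`;
consequently `ν = γ⁺_{i;m}` or `ν = γ⁻_{i;m}` for some `i ∈ ℤ/ℓℤ`. -/
theorem one_dimensional_KLR_classification
    (ℓ m : ℕ)
    (V : Type*) [AddCommGroup V] [Module ℂ V]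
    (E : (Fin m → ZMod ℓ) → Module.End ℂ V)
    (X : ℕ → Module.End ℂ V) (Ψ : ℕ → Module.End ℂ V)
    (v : V) (hv : v ≠ 0) (hspan : ∀ w : V, ∃ c : ℂ, w = c • v)
    (s : Fin m → ZMod ℓ) (hsv : E s v = v) (hother : ∀ t, t ≠ s → E t v = 0)
    -- KLR relations:
    (hPsiE : ∀ (r : ℕ) (hr : r + 1 < m) t,
      Ψ r * E t = E (fun p => t (Equiv.swap (⟨r, by omega⟩ : Fin m) ⟨r + 1, hr⟩ p)) * Ψ r)
    (hPsiSq : ∀ (r : ℕ) (hr : r + 1 < m) (t : Fin m → ZMod ℓ),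
      Ψ r * Ψ r * E t =
        if t ⟨r, by omega⟩ = t ⟨r + 1, hr⟩ then 0
        else if t ⟨r + 1, hr⟩ = t ⟨r, by omega⟩ + 1 ∨ t ⟨r + 1, hr⟩ = t ⟨r, by omega⟩ - 1 then
          (X r ^ (-(cartanA ℓ (t ⟨r, by omega⟩) (t ⟨r + 1, hr⟩))).toNat
            + X (r + 1) ^ (-(cartanA ℓ (t ⟨r + 1, hr⟩) (t ⟨r, by omega⟩))).toNat) * E t
        else E t)
    (hBraid : ∀ (r : ℕ) (hr : r + 2 < m) (t : Fin m → ZMod ℓ),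
      (Ψ r * Ψ (r + 1) * Ψ r - Ψ (r + 1) * Ψ r * Ψ (r + 1)) * E t =
        if t ⟨r, by omega⟩ = t ⟨r + 2, hr⟩ ∧
            (t ⟨r + 1, by omega⟩ = t ⟨r, by omega⟩ + 1 ∨
             t ⟨r + 1, by omega⟩ = t ⟨r, by omega⟩ - 1) then
          (if ℓ = 2 then (X r + X (r + 2)) * E t else E t)
        else 0)
    (hDot : ∀ (r : ℕ) (hr : r + 1 < m) (u : ℕ) (hu : u < m) (t : Fin m → ZMod ℓ),
      (Ψ r * X u - X (if u = r then r + 1 else if u = r + 1 then r else u) * Ψ r) * E t =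
        if u = r ∧ t ⟨r, by omega⟩ = t ⟨r + 1, hr⟩ then E t
        else if u = r + 1 ∧ t ⟨r, by omega⟩ = t ⟨r + 1, hr⟩ then -(E t)
        else 0)
    -- each `x_r` acts nilpotently on a finite-dimensional module:
    (hnil : ∀ (r : ℕ), r < m → ∃ n : ℕ, (X r) ^ (n + 1) = 0) :
    (∀ r : ℕ, r < m → X r v = 0) ∧
    (∀ r : ℕ, r + 1 < m → Ψ r v = 0) ∧
    ((∀ (r : ℕ) (hr : r + 1 < m), s ⟨r + 1, hr⟩ = s ⟨r, by omega⟩ + 1) ∨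
     (∀ (r : ℕ) (hr : r + 1 < m), s ⟨r + 1, hr⟩ = s ⟨r, by omega⟩ - 1)) ∧
    ((∃ i : ZMod ℓ, ∀ r : Fin m, s r = i + (r.val : ZMod ℓ)) ∨
     (∃ i : ZMod ℓ, ∀ r : Fin m, s r = i - (r.val : ZMod ℓ))) := by
  have hX : ∀ r : ℕ, r < m → X r v = 0 := fun r hr =>
    let ⟨n, hn⟩ := hnil r hr
    Module.End.apply_eq_zero_of_isNilpotent hv hspan ⟨n + 1, hn⟩
  have hne := klr_adjacent_ne hv hspan hsv hX hDot
  have hΨ : ∀ r : ℕ, r + 1 < m → Ψ r v = 0 := fun r hr =>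
    klr_psi_apply_eq_zero hspan hsv hother hPsiE r hr (hne r hr)
  have hstep := fun r hr => klr_adjacent_step hv hsv hPsiSq r hr (hne r hr) (hΨ r hr)
  have hdir := ZMod.ascending_or_descending_of_no_backtrack hstep
    fun hℓ => klr_no_backtrack hv hsv hΨ hstep hBraid hℓ
  refine ⟨hX, hΨ, hdir, ?_⟩
  rcases hdir with hup | hdown
  · obtain ⟨i, hi⟩ := Fin.exists_forall_eq_add_nsmul s 1 hup
    exact .inl ⟨i, fun r => by rw [hi, nsmul_one]⟩
  · obtain ⟨i, hi⟩ :=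
      Fin.exists_forall_eq_add_nsmul s (-1) (by simpa only [sub_eq_add_neg] using hdown)
    exact .inr ⟨i, fun r => by rw [hi, smul_neg, nsmul_one, sub_eq_add_neg]⟩
end

section
/- Let Λ = Σ_i λ_i Λ_i ∈ P⁺ and let M be a simple R(ν)-module in the category rep Λ (i.e. ε̌_i(M) ≤ λ_i for all i). Define φ^Λ_i(M) = λ_i + ε_i(M) + wt_i(M). Then, assuming the standard interface, φ^Λ_i(M) = max{n ∈ ℤ : pr_Λ f̃_i^n M ≠ 0}, where pr_Λ is the functor M ↦ M / I^Λ M killing the cyclotomic ideal. In particular for Λ = Λ_j and M ≠ the unit module, φ^{Λ_j}_i(M) = jump_i(M). -/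
/-!
Along the `f̃_i`-string of `M` the jump `J m := jump_i(f̃_i^m M)` drops by one per step until
it reaches `0`, while `ε̌_i` grows by `J (m+1) - J m + 1 ∈ {0, 1}`. Hence `J 0 ≥ 0`,
`J m = max 0 (J 0 - m)`, and `ε̌_i` stays constant for `J 0` steps and then grows by one per
step; the other `ε̌_j` never change. So `f̃_i^m M ∈ rep Λ` exactly as long as
`max 0 (m - J 0) ≤ λ_i - ε̌_i(M)`, i.e. `m ≤ λ_i + ε_i(M) + wt_i(M)`.
-/

theorem Int.eq_max_zero_sub_of_succ_eq {J : ℕ → ℤ} (h0 : 0 ≤ J 0)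
    (hstep : ∀ m, J (m + 1) = max 0 (J m - 1)) (m : ℕ) : J m = max 0 (J 0 - m) := by
  induction m with
  | zero => simpa using h0
  | succ k ih => rw [hstep, ih]; push_cast; omega

theorem Int.eq_add_sub_of_succ_sub_eq {c J : ℕ → ℤ}
    (hstep : ∀ m, c (m + 1) - c m = J (m + 1) - J m + 1) (m : ℕ) :
    c m = c 0 + m + J m - J 0 := by
  induction m with
  | zero => simp
  | succ k ih => have := hstep k; push_cast; linarith

section KLR

variable {ι S : Type*} {wt : ι → S → ℤ} {eps epsCh : ι → S → ℕ} {ftil : ι → S → S}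

def jump (wt : ι → S → ℤ) (eps epsCh : ι → S → ℕ) (i : ι) (N : S) : ℤ :=
  wt i N + eps i N + epsCh i N

theorem jump_ftil
    (hjump_f : ∀ j N, wt j (ftil j N) + (eps j (ftil j N) : ℤ) + (epsCh j (ftil j N) : ℤ) =
      max 0 (wt j N + (eps j N : ℤ) + (epsCh j N : ℤ) - 1)) (i : ι) (N : S) :
    jump wt eps epsCh i (ftil i N) = max 0 (jump wt eps epsCh i N - 1) :=
  hjump_f i N

theorem epsCh_ftil_sub (heps_f : ∀ j N, eps j (ftil j N) = eps j N + 1)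
    (hwt_f : ∀ j N, wt j (ftil j N) = wt j N - 2) (i : ι) (N : S) :
    (epsCh i (ftil i N) : ℤ) - epsCh i N =
      jump wt eps epsCh i (ftil i N) - jump wt eps epsCh i N + 1 := by
  simp only [jump, hwt_f, heps_f]
  push_cast
  ring

theorem jump_nonneg (heps_f : ∀ j N, eps j (ftil j N) = eps j N + 1)
    (hwt_f : ∀ j N, wt j (ftil j N) = wt j N - 2)
    (hepsCh_f : ∀ j N, epsCh j (ftil j N) = epsCh j N ∨ epsCh j (ftil j N) = epsCh j N + 1)
    (hjump_f : ∀ j N, wt j (ftil j N) + (eps j (ftil j N) : ℤ) + (epsCh j (ftil j N) : ℤ) =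
      max 0 (wt j N + (eps j N : ℤ) + (epsCh j N : ℤ) - 1)) (i : ι) (N : S) :
    0 ≤ jump wt eps epsCh i N := by
  have hsub := epsCh_ftil_sub (epsCh := epsCh) heps_f hwt_f i N
  have hnext := jump_ftil hjump_f i N
  rcases hepsCh_f i N with h | h <;> rw [h] at hsub <;> push_cast at hsub <;> omega

theorem jump_iterate_ftil (heps_f : ∀ j N, eps j (ftil j N) = eps j N + 1)
    (hwt_f : ∀ j N, wt j (ftil j N) = wt j N - 2)
    (hepsCh_f : ∀ j N, epsCh j (ftil j N) = epsCh j N ∨ epsCh j (ftil j N) = epsCh j N + 1)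
    (hjump_f : ∀ j N, wt j (ftil j N) + (eps j (ftil j N) : ℤ) + (epsCh j (ftil j N) : ℤ) =
      max 0 (wt j N + (eps j N : ℤ) + (epsCh j N : ℤ) - 1)) (i : ι) (N : S) (m : ℕ) :
    jump wt eps epsCh i ((ftil i)^[m] N) = max 0 (jump wt eps epsCh i N - m) :=
  Int.eq_max_zero_sub_of_succ_eq (J := fun m => jump wt eps epsCh i ((ftil i)^[m] N))
    (jump_nonneg heps_f hwt_f hepsCh_f hjump_f i N)
    (fun m => by simp only [Function.iterate_succ_apply']; exact jump_ftil hjump_f i _) m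

theorem epsCh_iterate_ftil (heps_f : ∀ j N, eps j (ftil j N) = eps j N + 1)
    (hwt_f : ∀ j N, wt j (ftil j N) = wt j N - 2)
    (hepsCh_f : ∀ j N, epsCh j (ftil j N) = epsCh j N ∨ epsCh j (ftil j N) = epsCh j N + 1)
    (hjump_f : ∀ j N, wt j (ftil j N) + (eps j (ftil j N) : ℤ) + (epsCh j (ftil j N) : ℤ) =
      max 0 (wt j N + (eps j N : ℤ) + (epsCh j N : ℤ) - 1)) (i : ι) (N : S) (m : ℕ) :
    (epsCh i ((ftil i)^[m] N) : ℤ) = epsCh i N + max 0 (m - jump wt eps epsCh i N) := by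
  have htel := Int.eq_add_sub_of_succ_sub_eq
    (c := fun m => (epsCh i ((ftil i)^[m] N) : ℤ))
    (J := fun m => jump wt eps epsCh i ((ftil i)^[m] N))
    (fun m => by simp only [Function.iterate_succ_apply']; exact epsCh_ftil_sub heps_f hwt_f i _) m
  have hJ := jump_iterate_ftil heps_f hwt_f hepsCh_f hjump_f i N m
  simp only [Function.iterate_zero, id_eq] at htel
  omega

theorem epsCh_iterate_ftil_of_ne (hepsCh_f' : ∀ j k N, j ≠ k → epsCh j (ftil k N) = epsCh j N)
    {i j : ι} (hji : j ≠ i) (N : S) (m : ℕ) : epsCh j ((ftil i)^[m] N) = epsCh j N :=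
  congrFun (Function.iterate_invariant (funext fun N => hepsCh_f' j i N hji) m) N

theorem iterate_ftil_mem_rep_iff {Λ : ι → ℕ} {M : S} (hrep : ∀ j, epsCh j M ≤ Λ j)
    (heps_f : ∀ j N, eps j (ftil j N) = eps j N + 1)
    (hwt_f : ∀ j N, wt j (ftil j N) = wt j N - 2)
    (hepsCh_f : ∀ j N, epsCh j (ftil j N) = epsCh j N ∨ epsCh j (ftil j N) = epsCh j N + 1)
    (hepsCh_f' : ∀ j k N, j ≠ k → epsCh j (ftil k N) = epsCh j N)
    (hjump_f : ∀ j N, wt j (ftil j N) + (eps j (ftil j N) : ℤ) + (epsCh j (ftil j N) : ℤ) =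
      max 0 (wt j N + (eps j N : ℤ) + (epsCh j N : ℤ) - 1)) (i : ι) (m : ℕ) :
    (∀ j, epsCh j ((ftil i)^[m] M) ≤ Λ j) ↔ (m : ℤ) ≤ Λ i + eps i M + wt i M := by
  have hi : (∀ j, epsCh j ((ftil i)^[m] M) ≤ Λ j) ↔ epsCh i ((ftil i)^[m] M) ≤ Λ i := by
    refine ⟨fun h => h i, fun h j => ?_⟩
    by_cases hji : j = i
    · exact hji ▸ h
    · exact (epsCh_iterate_ftil_of_ne hepsCh_f' hji M m).symm ▸ hrep j
  have hcount := epsCh_iterate_ftil heps_f hwt_f hepsCh_f hjump_f i M m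
  have hJ := jump_nonneg heps_f hwt_f hepsCh_f hjump_f i M
  have hM := hrep i
  rw [hi, ← Int.ofNat_le, hcount]
  simp only [jump] at hcount hJ ⊢
  omega

end KLR

/-- Characterization of `φ^Λ_i` for simple KLR modules of type `A^{(1)}_{ℓ-1}`
(abstract interface on the set `S` of iso-classes of simple modules):
if `M ∈ rep Λ` (i.e. `ε̌_j(M) ≤ λ_j` for all `j`, which by Proposition cyclotomic-char
characterizes `pr_Λ M ≠ 0`), then `φ^Λ_i(M) = λ_i + ε_i(M) + wt_i(M)` is the largest
`n` with `pr_Λ f̃_i^n M ≠ 0`.  Moreover, for `Λ = Λ_j` and `M` not the unit module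
(so `ε̌_k(M) = δ_{kj}`), `φ^{Λ_j}_i(M) = jump_i(M)`. -/
theorem phi_cyclotomic_characterization {S : Type*} {ℓ : ℕ}
    (wt : ZMod ℓ → S → ℤ) (eps epsCh : ZMod ℓ → S → ℕ) (ftil : ZMod ℓ → S → S)
    (Λ : ZMod ℓ → ℕ) (M : S) (i : ZMod ℓ)
    (hrep : ∀ j, epsCh j M ≤ Λ j)
    (heps_f : ∀ j N, eps j (ftil j N) = eps j N + 1)
    (hwt_f : ∀ j N, wt j (ftil j N) = wt j N - 2)
    (hepsCh_f : ∀ j N, epsCh j (ftil j N) = epsCh j N ∨ epsCh j (ftil j N) = epsCh j N + 1)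
    (hepsCh_f' : ∀ j k N, j ≠ k → epsCh j (ftil k N) = epsCh j N)
    (hjump_f : ∀ j N,
      wt j (ftil j N) + (eps j (ftil j N) : ℤ) + (epsCh j (ftil j N) : ℤ) =
        max 0 (wt j N + (eps j N : ℤ) + (epsCh j N : ℤ) - 1)) :
    (∃ n : ℕ, (n : ℤ) = (Λ i : ℤ) + (eps i M : ℤ) + wt i M ∧
      IsGreatest {m : ℕ | ∀ j, epsCh j ((ftil i)^[m] M) ≤ Λ j} n) ∧
    (∀ j : ZMod ℓ, (∀ k, Λ k = if k = j then 1 else 0) →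
      (∀ k, epsCh k M = if k = j then 1 else 0) →
      (Λ i : ℤ) + (eps i M : ℤ) + wt i M
        = wt i M + (eps i M : ℤ) + (epsCh i M : ℤ)) := by
  have hmem := iterate_ftil_mem_rep_iff hrep heps_f hwt_f hepsCh_f hepsCh_f' hjump_f i
  have hphi_nonneg : 0 ≤ (Λ i : ℤ) + eps i M + wt i M := by exact_mod_cast (hmem 0).mp hrep
  refine ⟨⟨_, Int.toNat_of_nonneg hphi_nonneg, ?_, fun m hm => ?_⟩, fun j hΛ hCh => ?_⟩
  · simpa only [Set.mem_ofPred_eq, hmem] using (Int.toNat_of_nonneg hphi_nonneg).le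
  · rw [Set.mem_ofPred_eq, hmem] at hm
    exact Int.le_toNat hphi_nonneg |>.mpr hm
  · rw [hΛ i, hCh i]
    ring
end
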